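/- arXiv:2309.05119 — 2 statements merged into one kernel-verified Lean document; each statement's English description precedes it below -/
import Mathlib

section
/- Let β, ζ, μ, η, φ, τ, Θ, Ξ, Ω, θ be positive reals with μφ ≠ 0, τ ≠ 0 and η ≠ θμ + μφ(μ − ζ). Define A₁ = 1/μ, S₁ = (η − θμ)/(μφ), R₁ = (η − θμ + μφ(ζ − μ))/(βμφ), C₁ = R₁/(μτ), E₁ = R₁²Θ/(R₁²Θ + R₁Ξ + ΞΩ), and assume R₁ ≠ 0, R₁ + Ω ≠ 0 and R₁²Θ + R₁Ξ + ΞΩ ≠ 0. Then (A₁, S₁, R₁, C₁, E₁) is an equilibrium of the spatially homogeneous dimensionless system, i.e. all five of the following vanish: 1 + βA₁R₁ − A₁S₁ − ζA₁; μA₁S₁ − S₁; ηA₁R₁ − φR₁S₁ − θR₁; A₁R₁ − τC₁; ΘR₁²(1 − E₁)/(Ω + R₁) − ΞE₁. -/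
/-- the point `U₁ = (A₁, S₁, R₁, C₁, E₁)` is an equilibrium of the
spatially homogeneous dimensionless Multiple Sclerosis system:
all five reaction terms vanish at `U₁`. -/
theorem homogeneous_equilibrium
    (β ζ μ η φ τ Θ Ξ Ω θ : ℝ)
    (hβ : 0 < β) (hζ : 0 < ζ) (hμ : 0 < μ) (hη : 0 < η) (hφ : 0 < φ) (hτ : 0 < τ)
    (hΘ : 0 < Θ) (hΞ : 0 < Ξ) (hΩ : 0 < Ω) (hθ : 0 < θ)
    (hμφ : μ * φ ≠ 0) (hτ' : τ ≠ 0) (hη' : η ≠ θ * μ + μ * φ * (μ - ζ))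
    (A₁ S₁ R₁ C₁ E₁ : ℝ)
    (hA₁ : A₁ = 1 / μ)
    (hS₁ : S₁ = (η - θ * μ) / (μ * φ))
    (hR₁ : R₁ = (η - θ * μ + μ * φ * (ζ - μ)) / (β * μ * φ))
    (hC₁ : C₁ = R₁ / (μ * τ))
    (hE₁ : E₁ = R₁ ^ 2 * Θ / (R₁ ^ 2 * Θ + R₁ * Ξ + Ξ * Ω))
    (hR₁0 : R₁ ≠ 0) (hRΩ : R₁ + Ω ≠ 0) (hden : R₁ ^ 2 * Θ + R₁ * Ξ + Ξ * Ω ≠ 0) :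
    1 + β * A₁ * R₁ - A₁ * S₁ - ζ * A₁ = 0 ∧
    μ * A₁ * S₁ - S₁ = 0 ∧
    η * A₁ * R₁ - φ * R₁ * S₁ - θ * R₁ = 0 ∧
    A₁ * R₁ - τ * C₁ = 0 ∧
    Θ * R₁ ^ 2 * (1 - E₁) / (Ω + R₁) - Ξ * E₁ = 0 := by
  have hμ0 : μ ≠ 0 := hμ.ne'
  have hφ0 : φ ≠ 0 := hφ.ne'
  have hβ0 : β ≠ 0 := hβ.ne'
  have hΩR : Ω + R₁ ≠ 0 := by rwa [add_comm] at hRΩ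
  have last : Θ * R₁ ^ 2 * (1 - E₁) / (Ω + R₁) - Ξ * E₁ = 0 := by
    subst hE₁
    rw [div_sub' hΩR, div_eq_zero_iff]
    left
    field_simp [show R₁ * (Θ * R₁ + Ξ) + Ξ * Ω ≠ 0 by convert hden using 1; ring]
    ring
  subst hA₁ hS₁ hR₁ hC₁
  refine ⟨?_, ?_, ?_, ?_, last⟩
  · field_simp
    ring
  · field_simp
    ring
  · field_simp
    ring
  · field_simp
    ring
end

section
/- Let β, ζ, μ, η, φ, τ, Θ, Ξ, Ω, θ be positive reals and set θ̄ = η/μ + φ(ζ − μ). Assume θ < η/μ and θ̄ − βφ < θ < θ̄. Define A₁ = 1/μ, S₁ = (η − θμ)/(μφ), R₁ = (η − θμ + μφ(ζ − μ))/(βμφ), C₁ = R₁/(μτ), E₁ = R₁²Θ/(R₁²Θ + R₁Ξ + ΞΩ). Then A₁ > 0, S₁ > 0, 0 < R₁ < 1, C₁ > 0 and 0 < E₁ < 1; in particular the equilibrium belongs to the biologically admissible region {A > 0, S > 0, 0 < R ≤ 1, C > 0, E > 0}. -/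
/-- admissibility of the homogeneous equilibrium `U₁`: under
`θ < η/μ` and `θ̄ − βφ < θ < θ̄` with `θ̄ = η/μ + φ(ζ − μ)`, the equilibrium
components satisfy `A₁ > 0`, `S₁ > 0`, `0 < R₁ < 1`, `C₁ > 0`, `0 < E₁ < 1`;
in particular `U₁` lies in the biologically admissible region. -/
theorem equilibrium_admissibility
    (β ζ μ η φ τ Θ Ξ Ω θ : ℝ)
    (hβ : 0 < β) (hζ : 0 < ζ) (hμ : 0 < μ) (hη : 0 < η) (hφ : 0 < φ) (hτ : 0 < τ)
    (hΘ : 0 < Θ) (hΞ : 0 < Ξ) (hΩ : 0 < Ω) (hθ : 0 < θ)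
    (θbar : ℝ) (hθbar : θbar = η / μ + φ * (ζ - μ))
    (h1 : θ < η / μ) (h2 : θbar - β * φ < θ) (h3 : θ < θbar)
    (A₁ S₁ R₁ C₁ E₁ : ℝ)
    (hA₁ : A₁ = 1 / μ)
    (hS₁ : S₁ = (η - θ * μ) / (μ * φ))
    (hR₁ : R₁ = (η - θ * μ + μ * φ * (ζ - μ)) / (β * μ * φ))
    (hC₁ : C₁ = R₁ / (μ * τ))
    (hE₁ : E₁ = R₁ ^ 2 * Θ / (R₁ ^ 2 * Θ + R₁ * Ξ + Ξ * Ω)) :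
    0 < A₁ ∧ 0 < S₁ ∧ 0 < R₁ ∧ R₁ < 1 ∧ 0 < C₁ ∧ 0 < E₁ ∧ E₁ < 1 := by
  subst hθbar
  have hθμ : θ * μ < η := (lt_div_iff₀ hμ).mp h1
  have hdiv : η / μ * μ = η := div_mul_cancel₀ η hμ.ne'
  have hnum : 0 < η - θ * μ + μ * φ * (ζ - μ) := by nlinarith
  have hden : 0 < β * μ * φ := by positivity
  have hnumlt : η - θ * μ + μ * φ * (ζ - μ) < β * μ * φ := by nlinarith
  have hR : 0 < R₁ := by rw [hR₁]; exact div_pos hnum hden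
  have hR1 : R₁ < 1 := by rw [hR₁]; exact (div_lt_one hden).mpr hnumlt
  refine ⟨by rw [hA₁]; positivity,
    by rw [hS₁]; exact div_pos (by linarith) (by positivity),
    hR, hR1, by rw [hC₁]; positivity, ?_, ?_⟩
  · rw [hE₁]; positivity
  · rw [hE₁]
    have hd : 0 < R₁ ^ 2 * Θ + R₁ * Ξ + Ξ * Ω := by positivity
    rw [div_lt_one hd]
    nlinarith [mul_pos hΞ hΩ, mul_pos hR hΞ]
end
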